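/- For the one-layer nonlinear regression model, there exists a constant C₀ > 0 such that |⟨∇_θ |h(z; θ) − l|², θ⟩| ≤ C₀ d M_s (|y|² + 1)|θ| for all θ ∈ ℝ^d and y = (z, l) ∈ ℝ^m. -/

import Mathlib

open scoped RealInnerProductSpace

/-- The feature part z of a data point y = (z, l). -/
noncomputable def featurePart (d₀ d₁ : ℕ) (y : EuclideanSpace ℝ (Fin d₀ ⊕ Fin d₁)) :
    EuclideanSpace ℝ (Fin d₀) :=
  WithLp.toLp 2 (fun i => y (Sum.inl i))

/-- The label part l of a data point y = (z, l). -/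
noncomputable def labelPart (d₀ d₁ : ℕ) (y : EuclideanSpace ℝ (Fin d₀ ⊕ Fin d₁)) :
    EuclideanSpace ℝ (Fin d₁) :=
  WithLp.toLp 2 (fun j => y (Sum.inr j))

/-- One-layer network h(z, θ) = s(Wz + g), with θ = (W, g) flattened into
EuclideanSpace ℝ ((Fin d₁ × Fin d₀) ⊕ Fin d₁). -/
noncomputable def oneLayerNet (d₀ d₁ : ℕ) (s : Fin d₁ → ℝ → ℝ)
    (z : EuclideanSpace ℝ (Fin d₀))
    (θ : EuclideanSpace ℝ ((Fin d₁ × Fin d₀) ⊕ Fin d₁)) :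
    EuclideanSpace ℝ (Fin d₁) :=
  WithLp.toLp 2 (fun j => s j ((∑ i : Fin d₀, θ (Sum.inl (j, i)) * z i) + θ (Sum.inr j)))

noncomputable def oneLayerLoss (d₀ d₁ : ℕ) (s : Fin d₁ → ℝ → ℝ)
    (y : EuclideanSpace ℝ (Fin d₀ ⊕ Fin d₁))
    (θ : EuclideanSpace ℝ ((Fin d₁ × Fin d₀) ⊕ Fin d₁)) : ℝ :=
  ‖oneLayerNet d₀ d₁ s (featurePart d₀ d₁ y) θ - labelPart d₀ d₁ y‖ ^ 2

noncomputable def testGrad (d₀ d₁ : ℕ) (s : Fin d₁ → ℝ → ℝ)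
    (y : EuclideanSpace ℝ (Fin d₀ ⊕ Fin d₁))
    (θ : EuclideanSpace ℝ ((Fin d₁ × Fin d₀) ⊕ Fin d₁)) :=
  gradient (oneLayerLoss d₀ d₁ s y) θ

/-! Writing `a_j(θ) = (Wz + g)_j`, which is linear in `θ`, the loss is `∑ⱼ (sⱼ(aⱼ θ) - lⱼ)²`,
so by the chain rule `⟪∇_θ loss, θ⟫ = D loss(θ) θ = ∑ⱼ 2 (sⱼ(aⱼ) - lⱼ) sⱼ'(aⱼ) aⱼ`.
The three factors are bounded by `M_s + |y|`, `M_s` and `|θ| (|y| + 1)`, and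
`(M_s + |y|)(|y| + 1) ≤ 2 (M_s + 1)(|y|² + 1)`. -/

theorem EuclideanSpace.norm_toLp_comp_le {ι κ : Type*} [Fintype ι] [Fintype κ]
    {φ : κ → ι} (hφ : Function.Injective φ) (x : EuclideanSpace ℝ ι) :
    ‖(WithLp.toLp 2 (fun k => x (φ k)) : EuclideanSpace ℝ κ)‖ ≤ ‖x‖ := by
  rw [EuclideanSpace.norm_eq, EuclideanSpace.norm_eq]
  apply Real.sqrt_le_sqrt
  calc ∑ k, ‖x (φ k)‖ ^ 2
      = ∑ i ∈ Finset.univ.map ⟨φ, hφ⟩, ‖x i‖ ^ 2 := by rw [Finset.sum_map]; rfl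
    _ ≤ ∑ i, ‖x i‖ ^ 2 :=
        Finset.sum_le_sum_of_subset_of_nonneg (Finset.subset_univ _) fun i _ _ => by positivity

theorem inner_gradient_self {E : Type*} [NormedAddCommGroup E] [InnerProductSpace ℝ E]
    [CompleteSpace E] (f : E → ℝ) (x : E) :
    ⟪gradient f x, x⟫ = fderiv ℝ f x x :=
  InnerProductSpace.toDual_symm_apply

theorem fderiv_sum_comp_clm_apply_self {E ι : Type*} [NormedAddCommGroup E] [NormedSpace ℝ E]
    [Fintype ι] (ψ : ι → ℝ → ℝ) (L : ι → E →L[ℝ] ℝ) (x : E)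
    (hψ : ∀ i, DifferentiableAt ℝ (ψ i) (L i x)) :
    fderiv ℝ (fun x => ∑ i, ψ i (L i x)) x x = ∑ i, deriv (ψ i) (L i x) * L i x := by
  have hsum : HasFDerivAt (fun x => ∑ i, ψ i (L i x))
      (∑ i, deriv (ψ i) (L i x) • L i) x :=
    HasFDerivAt.fun_sum fun i _ => (hψ i).hasDerivAt.comp_hasFDerivAt x (L i).hasFDerivAt
  simp [hsum.fderiv]

theorem deriv_sub_const_sq {f : ℝ → ℝ} {t : ℝ} (hf : DifferentiableAt ℝ f t) (c : ℝ) :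
    deriv (fun t => (f t - c) ^ 2) t = 2 * (f t - c) * deriv f t := by
  rw [((hf.hasDerivAt.sub_const c).fun_pow 2).deriv]
  ring

section OneLayer

variable {d₀ d₁ : ℕ}

noncomputable def preactivation (z : EuclideanSpace ℝ (Fin d₀)) (j : Fin d₁) :
    EuclideanSpace ℝ ((Fin d₁ × Fin d₀) ⊕ Fin d₁) →L[ℝ] ℝ :=
  ∑ i, z i • EuclideanSpace.proj (Sum.inl (j, i)) + EuclideanSpace.proj (Sum.inr j)

theorem preactivation_apply (z : EuclideanSpace ℝ (Fin d₀)) (j : Fin d₁)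
    (θ : EuclideanSpace ℝ ((Fin d₁ × Fin d₀) ⊕ Fin d₁)) :
    preactivation z j θ = ∑ i, θ (Sum.inl (j, i)) * z i + θ (Sum.inr j) := by
  simp [preactivation, mul_comm]

theorem norm_featurePart_le (y : EuclideanSpace ℝ (Fin d₀ ⊕ Fin d₁)) :
    ‖featurePart d₀ d₁ y‖ ≤ ‖y‖ :=
  EuclideanSpace.norm_toLp_comp_le Sum.inl_injective y

theorem abs_labelPart_apply_le (y : EuclideanSpace ℝ (Fin d₀ ⊕ Fin d₁)) (j : Fin d₁) :
    |labelPart d₀ d₁ y j| ≤ ‖y‖ :=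
  PiLp.norm_apply_le y (Sum.inr j)

theorem abs_preactivation_le (z : EuclideanSpace ℝ (Fin d₀)) (j : Fin d₁)
    (θ : EuclideanSpace ℝ ((Fin d₁ × Fin d₀) ⊕ Fin d₁)) :
    |preactivation z j θ| ≤ ‖θ‖ * (‖z‖ + 1) := by
  set row : EuclideanSpace ℝ (Fin d₀) := WithLp.toLp 2 fun i => θ (Sum.inl (j, i))
  have hrow : ‖row‖ ≤ ‖θ‖ :=
    EuclideanSpace.norm_toLp_comp_le (fun _ _ h => by simpa using h) θ
  have hweights : |∑ i, θ (Sum.inl (j, i)) * z i| ≤ ‖θ‖ * ‖z‖ := by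
    have hinner : ∑ i, θ (Sum.inl (j, i)) * z i = ⟪row, z⟫ := by
      simp [row, PiLp.inner_apply, mul_comm]
    rw [hinner]
    exact (abs_real_inner_le_norm _ _).trans (by gcongr)
  calc |preactivation z j θ|
      ≤ |∑ i, θ (Sum.inl (j, i)) * z i| + |θ (Sum.inr j)| := by
        rw [preactivation_apply]; exact abs_add_le _ _
    _ ≤ ‖θ‖ * ‖z‖ + ‖θ‖ := add_le_add hweights (PiLp.norm_apply_le θ _)
    _ = ‖θ‖ * (‖z‖ + 1) := by ring

theorem oneLayerLoss_eq_sum (s : Fin d₁ → ℝ → ℝ) (y : EuclideanSpace ℝ (Fin d₀ ⊕ Fin d₁)) :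
    oneLayerLoss d₀ d₁ s y = fun θ =>
      ∑ j, (s j (preactivation (featurePart d₀ d₁ y) j θ) - labelPart d₀ d₁ y j) ^ 2 := by
  funext θ
  rw [oneLayerLoss, EuclideanSpace.norm_eq, Real.sq_sqrt (by positivity)]
  refine Finset.sum_congr rfl fun j _ => ?_
  simp [oneLayerNet, preactivation_apply, sq_abs]

theorem inner_gradient_oneLayerLoss_self (s : Fin d₁ → ℝ → ℝ) (hs : ∀ j, Differentiable ℝ (s j))
    (y : EuclideanSpace ℝ (Fin d₀ ⊕ Fin d₁)) (θ : EuclideanSpace ℝ ((Fin d₁ × Fin d₀) ⊕ Fin d₁)) :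
    ⟪gradient (oneLayerLoss d₀ d₁ s y) θ, θ⟫ =
      ∑ j, let a := preactivation (featurePart d₀ d₁ y) j θ
        2 * (s j a - labelPart d₀ d₁ y j) * deriv (s j) a * a := by
  rw [inner_gradient_self, oneLayerLoss_eq_sum,
    fderiv_sum_comp_clm_apply_self (fun j t => (s j t - labelPart d₀ d₁ y j) ^ 2)
      (preactivation (featurePart d₀ d₁ y)) θ
      fun j => ((hs j).differentiableAt.sub_const _).pow 2]
  simp only [deriv_sub_const_sq (hs _).differentiableAt]

end OneLayer

open scoped RealInnerProductSpace in
theorem oneLayer_gradient_inner_product_bound_general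
    (d₀ d₁ : ℕ) (hd₁ : 0 < d₁)
    (s : Fin d₁ → ℝ → ℝ) (Ms : ℝ)
    (hsdiff : ∀ j, ContDiff ℝ 1 (s j))
    (hsbd : ∀ j x, |s j x| ≤ Ms)
    (hs'bd : ∀ j x, |deriv (s j) x| ≤ Ms) :
    ∃ C₀ > (0 : ℝ),
      ∀ (θ : EuclideanSpace ℝ ((Fin d₁ × Fin d₀) ⊕ Fin d₁))
        (y : EuclideanSpace ℝ (Fin d₀ ⊕ Fin d₁)),
        |⟪gradient (fun θ' => oneLayerLoss d₀ d₁ s y θ') θ, θ⟫|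
          ≤ C₀ * (d₀ * d₁ + d₁ : ℕ) * Ms * (‖y‖ ^ 2 + 1) * ‖θ‖ := by
  have hMs : 0 ≤ Ms := (abs_nonneg _).trans (hsbd ⟨0, hd₁⟩ 0)
  refine ⟨4 * Ms + 4, by linarith, fun θ y => ?_⟩
  set B := 2 * (Ms + ‖y‖) * Ms * (‖θ‖ * (‖y‖ + 1))
  have hterm : ∀ j, |let a := preactivation (featurePart d₀ d₁ y) j θ
      2 * (s j a - labelPart d₀ d₁ y j) * deriv (s j) a * a| ≤ B := fun j => by
    simp only [abs_mul, abs_two, B]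
    gcongr
    · exact (abs_sub _ _).trans (add_le_add (hsbd j _) (abs_labelPart_apply_le y j))
    · exact hs'bd j _
    · exact (abs_preactivation_le _ j θ).trans (by gcongr; exact norm_featurePart_le y)
  have hquad : (Ms + ‖y‖) * (‖y‖ + 1) ≤ (2 * Ms + 2) * (‖y‖ ^ 2 + 1) := by
    nlinarith [sq_nonneg (‖y‖ - 1), mul_nonneg hMs (sq_nonneg (‖y‖ - 1)), norm_nonneg y]
  have hd : (d₁ : ℝ) ≤ (d₀ * d₁ + d₁ : ℕ) := by exact_mod_cast Nat.le_add_left d₁ (d₀ * d₁)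
  rw [inner_gradient_oneLayerLoss_self s fun j => (hsdiff j).differentiable one_ne_zero]
  calc _ ≤ ∑ _j : Fin d₁, B :=
        (Finset.abs_sum_le_sum_abs _ _).trans (Finset.sum_le_sum fun j _ => hterm j)
    _ = d₁ * ((2 * Ms * ‖θ‖) * ((Ms + ‖y‖) * (‖y‖ + 1))) := by
        simp only [Finset.sum_const, Finset.card_univ, Fintype.card_fin, nsmul_eq_mul, B]; ring
    _ ≤ (d₀ * d₁ + d₁ : ℕ) * ((2 * Ms * ‖θ‖) * ((2 * Ms + 2) * (‖y‖ ^ 2 + 1))) := by gcongr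
    _ = (4 * Ms + 4) * (d₀ * d₁ + d₁ : ℕ) * Ms * (‖y‖ ^ 2 + 1) * ‖θ‖ := by ring

open scoped RealInnerProductSpace in
/-- for the one-layer nonlinear regression model with bounded C¹
activations (|s_i|, |s_i'| ≤ M_s), there is C₀ > 0 with
|⟨∇_θ |h(z;θ) − l|², θ⟩| ≤ C₀ d M_s (|y|² + 1)|θ|, where d = d₀d₁ + d₁. -/
theorem oneLayer_gradient_inner_product_bound
    (d₀ d₁ : ℕ) (hd₀ : 0 < d₀) (hd₁ : 0 < d₁)
    (s : Fin d₁ → ℝ → ℝ) (Ms : ℝ)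
    (hsdiff : ∀ j, ContDiff ℝ 1 (s j))
    (hsbd : ∀ j x, |s j x| ≤ Ms)
    (hs'bd : ∀ j x, |deriv (s j) x| ≤ Ms) :
    ∃ C₀ > (0 : ℝ),
      ∀ (θ : EuclideanSpace ℝ ((Fin d₁ × Fin d₀) ⊕ Fin d₁))
        (y : EuclideanSpace ℝ (Fin d₀ ⊕ Fin d₁)),
        |⟪gradient (fun θ' => oneLayerLoss d₀ d₁ s y θ') θ, θ⟫|
          ≤ C₀ * (d₀ * d₁ + d₁ : ℕ) * Ms * (‖y‖ ^ 2 + 1) * ‖θ‖ :=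
  oneLayer_gradient_inner_product_bound_general d₀ d₁ hd₁ s Ms hsdiff hsbd hs'bd
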